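/- arXiv:2407.00770 — 4 statements merged into one kernel-verified Lean document; each statement's English description precedes it below -/
import Mathlib

section
/- Suppose u₁, u₂ and ũ₁, ũ₂ are two pairs of linearly independent solutions of u'' + q(t)·u = 0 on an interval I, and suppose there is a nowhere-vanishing function a : I → ℝ with ũᵢ(t) = a(t)·uᵢ(t) for i = 1,2 and all t ∈ I. Then a is constant. -/
/-!
Writing `W(f, g) = f g' - g f'`, the Wronskian of two solutions of `u'' + q u = 0` has
derivative `f g'' - g f'' = 0`, so it is constant on the interval. The factor `a` is locally a
quotient `ũᵢ / uᵢ` of differentiable functions (the `uᵢ` have no common zero since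
`W(u₁, u₂) ≠ 0`), so it is differentiable, and the product rule gives
`W(a u₁, a u₂) = a² W(u₁, u₂)`. Comparing the two constant Wronskians shows that `a²` is
constant, and a continuous nowhere-vanishing function with constant square on a connected set
is constant.
-/

open Set Filter Topology

noncomputable def wronskian (f g : ℝ → ℝ) (t : ℝ) : ℝ :=
  f t * deriv g t - g t * deriv f t

theorem ContDiffOn.differentiableOn_deriv_of_isOpen {f : ℝ → ℝ} {s : Set ℝ}
    (hf : ContDiffOn ℝ 2 f s) (hs : IsOpen s) : DifferentiableOn ℝ (deriv f) s :=
  (hf.deriv_of_isOpen hs (m := 1) (by norm_num)).differentiableOn one_ne_zero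

theorem hasDerivAt_wronskian {f g : ℝ → ℝ} {x : ℝ} (hf : DifferentiableAt ℝ f x)
    (hg : DifferentiableAt ℝ g x) (hf' : DifferentiableAt ℝ (deriv f) x)
    (hg' : DifferentiableAt ℝ (deriv g) x) :
    HasDerivAt (wronskian f g) (f x * deriv (deriv g) x - g x * deriv (deriv f) x) x := by
  have hprod := (hf.hasDerivAt.mul hg'.hasDerivAt).sub (hg.hasDerivAt.mul hf'.hasDerivAt)
  exact hprod.congr_deriv (by ring)

theorem Filter.EventuallyEq.wronskian_eq {f₁ f₂ g₁ g₂ : ℝ → ℝ} {x : ℝ}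
    (hf : f₁ =ᶠ[𝓝 x] f₂) (hg : g₁ =ᶠ[𝓝 x] g₂) : wronskian f₁ g₁ x = wronskian f₂ g₂ x := by
  simp only [wronskian, hf.eq_of_nhds, hg.eq_of_nhds, hf.deriv_eq, hg.deriv_eq]

theorem wronskian_mul_left {a f g : ℝ → ℝ} {x : ℝ} (ha : DifferentiableAt ℝ a x)
    (hf : DifferentiableAt ℝ f x) (hg : DifferentiableAt ℝ g x) :
    wronskian (fun t ↦ a t * f t) (fun t ↦ a t * g t) x = a x ^ 2 * wronskian f g x := by
  simp only [wronskian, deriv_fun_mul ha hf, deriv_fun_mul ha hg]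
  ring

theorem wronskian_eq_of_ode {s : Set ℝ} (hs : IsOpen s) (hs' : IsPreconnected s)
    {q f g : ℝ → ℝ} (hf : ContDiffOn ℝ 2 f s) (hg : ContDiffOn ℝ 2 g s)
    (hodef : ∀ t ∈ s, deriv (deriv f) t + q t * f t = 0)
    (hodeg : ∀ t ∈ s, deriv (deriv g) t + q t * g t = 0) {x y : ℝ} (hx : x ∈ s) (hy : y ∈ s) :
    wronskian f g x = wronskian f g y := by
  have hW : ∀ t ∈ s, HasDerivAt (wronskian f g) 0 t := fun t ht ↦ by
    have hderiv := hasDerivAt_wronskian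
      ((hf.differentiableOn two_ne_zero).differentiableAt (hs.mem_nhds ht))
      ((hg.differentiableOn two_ne_zero).differentiableAt (hs.mem_nhds ht))
      ((hf.differentiableOn_deriv_of_isOpen hs).differentiableAt (hs.mem_nhds ht))
      ((hg.differentiableOn_deriv_of_isOpen hs).differentiableAt (hs.mem_nhds ht))
    exact hderiv.congr_deriv (by linear_combination f t * hodeg t ht - g t * hodef t ht)
  exact hs.is_const_of_deriv_eq_zero hs'
    (fun t ht ↦ (hW t ht).differentiableAt.differentiableWithinAt) (fun t ht ↦ (hW t ht).deriv)
    hx hy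

theorem differentiableAt_of_eventuallyEq_mul {a f g : ℝ → ℝ} {x : ℝ}
    (hf : DifferentiableAt ℝ f x) (hg : DifferentiableAt ℝ g x) (hfx : f x ≠ 0)
    (h : g =ᶠ[𝓝 x] fun t ↦ a t * f t) : DifferentiableAt ℝ a x := by
  have ha : (fun t ↦ g t / f t) =ᶠ[𝓝 x] a := by
    filter_upwards [h, hf.continuousAt.eventually_ne hfx] with t hgt hft
    rw [hgt, mul_div_cancel_right₀ _ hft]
  exact (hg.div hf hfx).congr_of_eventuallyEq ha.symm

theorem differentiableAt_of_eventuallyEq_mul_of_wronskian_ne_zero {a f₁ f₂ g₁ g₂ : ℝ → ℝ}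
    {x : ℝ} (hf₁ : DifferentiableAt ℝ f₁ x) (hf₂ : DifferentiableAt ℝ f₂ x)
    (hg₁ : DifferentiableAt ℝ g₁ x) (hg₂ : DifferentiableAt ℝ g₂ x)
    (hW : wronskian f₁ f₂ x ≠ 0) (h₁ : g₁ =ᶠ[𝓝 x] fun t ↦ a t * f₁ t)
    (h₂ : g₂ =ᶠ[𝓝 x] fun t ↦ a t * f₂ t) : DifferentiableAt ℝ a x := by
  have hf : f₁ x ≠ 0 ∨ f₂ x ≠ 0 := by
    by_contra! h
    exact hW (by simp [wronskian, h.1, h.2])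
  rcases hf with hf | hf
  · exact differentiableAt_of_eventuallyEq_mul hf₁ hg₁ hf h₁
  · exact differentiableAt_of_eventuallyEq_mul hf₂ hg₂ hf h₂

theorem proportional_solution_pairs_constant_factor_general (lo hi : ℝ)
    (q u₁ u₂ v₁ v₂ a : ℝ → ℝ)
    (hu₁ : ContDiffOn ℝ 2 u₁ (Set.Ioo lo hi))
    (hu₂ : ContDiffOn ℝ 2 u₂ (Set.Ioo lo hi))
    (hv₁ : ContDiffOn ℝ 2 v₁ (Set.Ioo lo hi))
    (hv₂ : ContDiffOn ℝ 2 v₂ (Set.Ioo lo hi))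
    (hodeu₁ : ∀ t ∈ Set.Ioo lo hi, deriv (deriv u₁) t + q t * u₁ t = 0)
    (hodeu₂ : ∀ t ∈ Set.Ioo lo hi, deriv (deriv u₂) t + q t * u₂ t = 0)
    (hodev₁ : ∀ t ∈ Set.Ioo lo hi, deriv (deriv v₁) t + q t * v₁ t = 0)
    (hodev₂ : ∀ t ∈ Set.Ioo lo hi, deriv (deriv v₂) t + q t * v₂ t = 0)
    (hWu : ∀ t ∈ Set.Ioo lo hi, u₁ t * deriv u₂ t - u₂ t * deriv u₁ t ≠ 0)
    (ha : ∀ t ∈ Set.Ioo lo hi, a t ≠ 0)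
    (hprop₁ : ∀ t ∈ Set.Ioo lo hi, v₁ t = a t * u₁ t)
    (hprop₂ : ∀ t ∈ Set.Ioo lo hi, v₂ t = a t * u₂ t) :
    ∀ s ∈ Set.Ioo lo hi, ∀ t ∈ Set.Ioo lo hi, a s = a t := by
  intro s hs t ht
  have hI : IsOpen (Ioo lo hi) := isOpen_Ioo
  have hdiff {f : ℝ → ℝ} (hf : ContDiffOn ℝ 2 f (Ioo lo hi)) {x : ℝ} (hx : x ∈ Ioo lo hi) :
      DifferentiableAt ℝ f x :=
    (hf.differentiableOn two_ne_zero).differentiableAt (hI.mem_nhds hx)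
  have hprop {f g : ℝ → ℝ} (h : ∀ t ∈ Ioo lo hi, g t = a t * f t) {x : ℝ}
      (hx : x ∈ Ioo lo hi) : g =ᶠ[𝓝 x] fun t ↦ a t * f t :=
    eventually_of_mem (hI.mem_nhds hx) h
  have ha_diff : ∀ x ∈ Ioo lo hi, DifferentiableAt ℝ a x := fun x hx ↦
    differentiableAt_of_eventuallyEq_mul_of_wronskian_ne_zero (hdiff hu₁ hx) (hdiff hu₂ hx)
      (hdiff hv₁ hx) (hdiff hv₂ hx) (hWu x hx) (hprop hprop₁ hx) (hprop hprop₂ hx)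
  have hWv : ∀ x ∈ Ioo lo hi, wronskian v₁ v₂ x = a x ^ 2 * wronskian u₁ u₂ x := fun x hx ↦
    ((hprop hprop₁ hx).wronskian_eq (hprop hprop₂ hx)).trans
      (wronskian_mul_left (ha_diff x hx) (hdiff hu₁ hx) (hdiff hu₂ hx))
  have hsq : EqOn (a ^ 2) (fun _ ↦ a t ^ 2) (Ioo lo hi) := fun x hx ↦ by
    have hWx : wronskian u₁ u₂ x = wronskian u₁ u₂ t :=
      wronskian_eq_of_ode hI isPreconnected_Ioo hu₁ hu₂ hodeu₁ hodeu₂ hx ht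
    refine mul_right_cancel₀ (hWu t ht) ?_
    calc a x ^ 2 * wronskian u₁ u₂ t = wronskian v₁ v₂ x := by rw [hWv x hx, hWx]
      _ = wronskian v₁ v₂ t :=
        wronskian_eq_of_ode hI isPreconnected_Ioo hv₁ hv₂ hodev₁ hodev₂ hx ht
      _ = a t ^ 2 * wronskian u₁ u₂ t := hWv t ht
  exact isPreconnected_Ioo.eq_of_sq_eq
    (fun x hx ↦ (ha_diff x hx).continuousAt.continuousWithinAt) continuousOn_const hsq
    (fun _ ↦ ha t ht) ht rfl hs

/-- If two pairs of linearly independent solutions of `u'' + q u = 0` differ by a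
nowhere-vanishing factor `a`, then `a` is constant. -/
theorem proportional_solution_pairs_constant_factor (lo hi : ℝ)
    (q u₁ u₂ v₁ v₂ a : ℝ → ℝ)
    (hq : ContinuousOn q (Set.Ioo lo hi))
    (hu₁ : ContDiffOn ℝ 2 u₁ (Set.Ioo lo hi))
    (hu₂ : ContDiffOn ℝ 2 u₂ (Set.Ioo lo hi))
    (hv₁ : ContDiffOn ℝ 2 v₁ (Set.Ioo lo hi))
    (hv₂ : ContDiffOn ℝ 2 v₂ (Set.Ioo lo hi))
    (hodeu₁ : ∀ t ∈ Set.Ioo lo hi, deriv (deriv u₁) t + q t * u₁ t = 0)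
    (hodeu₂ : ∀ t ∈ Set.Ioo lo hi, deriv (deriv u₂) t + q t * u₂ t = 0)
    (hodev₁ : ∀ t ∈ Set.Ioo lo hi, deriv (deriv v₁) t + q t * v₁ t = 0)
    (hodev₂ : ∀ t ∈ Set.Ioo lo hi, deriv (deriv v₂) t + q t * v₂ t = 0)
    (hWu : ∀ t ∈ Set.Ioo lo hi, u₁ t * deriv u₂ t - u₂ t * deriv u₁ t ≠ 0)
    (hWv : ∀ t ∈ Set.Ioo lo hi, v₁ t * deriv v₂ t - v₂ t * deriv v₁ t ≠ 0)
    (ha : ∀ t ∈ Set.Ioo lo hi, a t ≠ 0)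
    (hprop₁ : ∀ t ∈ Set.Ioo lo hi, v₁ t = a t * u₁ t)
    (hprop₂ : ∀ t ∈ Set.Ioo lo hi, v₂ t = a t * u₂ t) :
    ∀ s ∈ Set.Ioo lo hi, ∀ t ∈ Set.Ioo lo hi, a s = a t :=
  proportional_solution_pairs_constant_factor_general lo hi q u₁ u₂ v₁ v₂ a hu₁ hu₂ hv₁ hv₂ hodeu₁
    hodeu₂ hodev₁ hodev₂ hWu ha hprop₁ hprop₂
end

section
/- Conversely to the correspondence between ODEs and projective curves: if v : I → ℝ is C³ with v' nowhere vanishing, then setting β(t) = |v'(t)|^{-1/2}, the functions u₁ = β·v and u₂ = β satisfy u₁'·u₂ − u₂'·u₁ = ±1 on I; in particular they are linearly independent solutions of the equation u'' + q·u = 0 with 2q = S(v). -/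
/-- The Schwarzian derivative `f'''/f' - (3/2) (f''/f')²`. -/
noncomputable def schwarzian (f : ℝ → ℝ) (t : ℝ) : ℝ :=
  deriv (deriv (deriv f)) t / deriv f t - 3 / 2 * (deriv (deriv f) t / deriv f t) ^ 2

noncomputable def auxB (ε : ℝ) (v : ℝ → ℝ) (x : ℝ) : ℝ := (ε * deriv v x) ^ (-(1:ℝ)/2)

noncomputable def auxB' (ε : ℝ) (v : ℝ → ℝ) (x : ℝ) : ℝ :=
  ε * deriv (deriv v) x * (-(1:ℝ)/2) * (ε * deriv v x) ^ (-(3:ℝ)/2)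

noncomputable def auxB'' (ε : ℝ) (v : ℝ → ℝ) (x : ℝ) : ℝ :=
  ε * deriv (deriv (deriv v)) x * (-(1:ℝ)/2) * (ε * deriv v x) ^ (-(3:ℝ)/2)
  + ε * deriv (deriv v) x * (-(1:ℝ)/2) *
      (ε * deriv (deriv v) x * (-(3:ℝ)/2) * (ε * deriv v x) ^ (-(5:ℝ)/2))

theorem aux_main (lo hi ε : ℝ) (v : ℝ → ℝ) (hε : ε = 1 ∨ ε = -1)
    (hv : ContDiffOn ℝ 3 v (Set.Ioo lo hi))
    (hv' : ∀ t ∈ Set.Ioo lo hi, deriv v t ≠ 0)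
    (hsign : ∀ t ∈ Set.Ioo lo hi, 0 < ε * deriv v t) :
    ∀ t ∈ Set.Ioo lo hi,
      (deriv (fun x => |deriv v x| ^ (-(1:ℝ)/2) * v x) t * (|deriv v t| ^ (-(1:ℝ)/2))
        - deriv (fun x => |deriv v x| ^ (-(1:ℝ)/2)) t * (|deriv v t| ^ (-(1:ℝ)/2) * v t) = ε)
      ∧ (deriv (deriv (fun x => |deriv v x| ^ (-(1:ℝ)/2) * v x)) t
          + schwarzian v t / 2 * (|deriv v t| ^ (-(1:ℝ)/2) * v t) = 0)
      ∧ (deriv (deriv (fun x => |deriv v x| ^ (-(1:ℝ)/2))) t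
          + schwarzian v t / 2 * (|deriv v t| ^ (-(1:ℝ)/2)) = 0) := by
  have h1 : ContDiffOn ℝ 2 (deriv v) (Set.Ioo lo hi) :=
    hv.deriv_of_isOpen isOpen_Ioo (by norm_num)
  have h2 : ContDiffOn ℝ 1 (deriv (deriv v)) (Set.Ioo lo hi) :=
    h1.deriv_of_isOpen isOpen_Ioo (by norm_num)
  have hvd : ∀ t ∈ Set.Ioo lo hi, HasDerivAt v (deriv v t) t := fun t ht =>
    ((hv.differentiableOn (by norm_num)).differentiableAt
      (isOpen_Ioo.mem_nhds ht)).hasDerivAt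
  have hwd : ∀ t ∈ Set.Ioo lo hi, HasDerivAt (deriv v) (deriv (deriv v) t) t := fun t ht =>
    ((h1.differentiableOn (by norm_num)).differentiableAt
      (isOpen_Ioo.mem_nhds ht)).hasDerivAt
  have hwd2 : ∀ t ∈ Set.Ioo lo hi,
      HasDerivAt (deriv (deriv v)) (deriv (deriv (deriv v)) t) t := fun t ht =>
    ((h2.differentiableOn (by norm_num)).differentiableAt
      (isOpen_Ioo.mem_nhds ht)).hasDerivAt
  have habs : ∀ x ∈ Set.Ioo lo hi, |deriv v x| = ε * deriv v x := by
    intro x hx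
    have hs := hsign x hx
    rcases hε with h | h <;> rw [h] at hs ⊢
    · rw [one_mul] at hs ⊢; exact abs_of_pos hs
    · have : deriv v x < 0 := by linarith
      rw [abs_of_neg this]; ring
  have hB : ∀ t ∈ Set.Ioo lo hi, HasDerivAt (auxB ε v) (auxB' ε v t) t := by
    intro t ht
    have h := ((hwd t ht).const_mul ε).rpow_const (p := -(1:ℝ)/2) (Or.inl (hsign t ht).ne')
    rw [show (-(1:ℝ)/2 - 1) = -(3:ℝ)/2 by norm_num] at h
    exact h
  have hB' : ∀ t ∈ Set.Ioo lo hi, HasDerivAt (auxB' ε v) (auxB'' ε v t) t := by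
    intro t ht
    have ha : HasDerivAt (fun x => ε * deriv (deriv v) x * (-(1:ℝ)/2))
        (ε * deriv (deriv (deriv v)) t * (-(1:ℝ)/2)) t :=
      ((hwd2 t ht).const_mul ε).mul_const _
    have hb := ((hwd t ht).const_mul ε).rpow_const (p := -(3:ℝ)/2) (Or.inl (hsign t ht).ne')
    rw [show (-(3:ℝ)/2 - 1) = -(5:ℝ)/2 by norm_num] at hb
    exact ha.mul hb
  have hu2ev : ∀ t ∈ Set.Ioo lo hi,
      (fun x => |deriv v x| ^ (-(1:ℝ)/2)) =ᶠ[nhds t] auxB ε v := by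
    intro t ht
    filter_upwards [isOpen_Ioo.mem_nhds ht] with x hx
    simp only [auxB]; rw [habs x hx]
  have hu1ev : ∀ t ∈ Set.Ioo lo hi,
      (fun x => |deriv v x| ^ (-(1:ℝ)/2) * v x) =ᶠ[nhds t]
        (fun x => auxB ε v x * v x) := by
    intro t ht
    filter_upwards [isOpen_Ioo.mem_nhds ht] with x hx
    simp only [auxB]; rw [habs x hx]
  have hC : ∀ t ∈ Set.Ioo lo hi, HasDerivAt (fun x => auxB ε v x * v x)
      (auxB' ε v t * v t + auxB ε v t * deriv v t) t := fun t ht =>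
    (hB t ht).mul (hvd t ht)
  have hd2 : ∀ t ∈ Set.Ioo lo hi,
      deriv (fun x => |deriv v x| ^ (-(1:ℝ)/2)) t = auxB' ε v t := fun t ht =>
    ((hu2ev t ht).deriv_eq).trans (hB t ht).deriv
  have hd1 : ∀ t ∈ Set.Ioo lo hi,
      deriv (fun x => |deriv v x| ^ (-(1:ℝ)/2) * v x) t
        = auxB' ε v t * v t + auxB ε v t * deriv v t := fun t ht =>
    ((hu1ev t ht).deriv_eq).trans (hC t ht).deriv
  have hd2' : ∀ t ∈ Set.Ioo lo hi,
      deriv (fun x => |deriv v x| ^ (-(1:ℝ)/2)) =ᶠ[nhds t] auxB' ε v := by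
    intro t ht
    refine (hu2ev t ht).deriv.trans ?_
    filter_upwards [isOpen_Ioo.mem_nhds ht] with x hx
    exact (hB x hx).deriv
  have hd1' : ∀ t ∈ Set.Ioo lo hi,
      deriv (fun x => |deriv v x| ^ (-(1:ℝ)/2) * v x) =ᶠ[nhds t]
        (fun x => auxB' ε v x * v x + auxB ε v x * deriv v x) := by
    intro t ht
    refine (hu1ev t ht).deriv.trans ?_
    filter_upwards [isOpen_Ioo.mem_nhds ht] with x hx
    exact (hC x hx).deriv
  have hdd2 : ∀ t ∈ Set.Ioo lo hi,
      deriv (deriv (fun x => |deriv v x| ^ (-(1:ℝ)/2))) t = auxB'' ε v t := fun t ht =>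
    ((hd2' t ht).deriv_eq).trans (hB' t ht).deriv
  have hdd1 : ∀ t ∈ Set.Ioo lo hi,
      deriv (deriv (fun x => |deriv v x| ^ (-(1:ℝ)/2) * v x)) t
        = (auxB'' ε v t * v t + auxB' ε v t * deriv v t)
          + (auxB' ε v t * deriv v t + auxB ε v t * deriv (deriv v) t) := fun t ht =>
    ((hd1' t ht).deriv_eq).trans (((hB' t ht).mul (hvd t ht)).add
      ((hB t ht).mul (hwd t ht))).deriv
  intro t ht
  have hp := hsign t ht
  have ha0 := hv' t ht
  rw [habs t ht] at *
  -- abbreviations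
  set a := deriv v t with ha_def
  set b := deriv (deriv v) t with hb_def
  set c := deriv (deriv (deriv v)) t with hc_def
  set A := (ε * a) ^ (-(1:ℝ)/2) with hA_def
  have hA : 0 < A := Real.rpow_pos_of_pos hp _
  have h3 : (ε * a) ^ (-(3:ℝ)/2) = A ^ 3 := by
    rw [hA_def, ← Real.rpow_natCast ((ε*a) ^ (-(1:ℝ)/2)) 3, ← Real.rpow_mul hp.le]
    norm_num
  have h5 : (ε * a) ^ (-(5:ℝ)/2) = A ^ 5 := by
    rw [hA_def, ← Real.rpow_natCast ((ε*a) ^ (-(1:ℝ)/2)) 5, ← Real.rpow_mul hp.le]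
    norm_num
  have key : A ^ 2 * (ε * a) = 1 := by
    rw [hA_def, ← Real.rpow_natCast ((ε*a) ^ (-(1:ℝ)/2)) 2, ← Real.rpow_mul hp.le]
    norm_num
    rw [Real.rpow_neg_one]
    exact inv_mul_cancel₀ hp.ne'
  have hε2 : ε ^ 2 = 1 := by rcases hε with h | h <;> rw [h] <;> norm_num
  have haA : a = ε / A ^ 2 := by
    field_simp
    linear_combination ε * key - a * A ^ 2 * hε2
  refine ⟨?_, ?_, ?_⟩
  · rw [hd1 t ht, hd2 t ht]
    simp only [auxB, auxB', ← ha_def, ← hb_def]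
    rw [← hA_def, h3]
    linear_combination ε * key - a * A ^ 2 * hε2
  · rw [hdd1 t ht]
    simp only [auxB, auxB', auxB'', schwarzian, ← ha_def, ← hb_def, ← hc_def]
    simp only [← hA_def, h3, h5]
    rw [haA]
    rcases hε with h | h <;> subst h <;> field_simp <;> ring
  · rw [hdd2 t ht]
    simp only [auxB, auxB'', schwarzian, ← ha_def, ← hb_def, ← hc_def]
    simp only [← hA_def, h3, h5]
    rw [haA]
    rcases hε with h | h <;> subst h <;> field_simp <;> ring


/-- Given an immersion `v` with `v' ≠ 0`, setting `β = |v'|^(-1/2)`, the functions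
`u₁ = β v` and `u₂ = β` have Wronskian `±1` and solve `u'' + q u = 0` with `2q = S(v)`. -/
theorem solutions_from_immersion (lo hi : ℝ) (v u₁ u₂ : ℝ → ℝ)
    (hv : ContDiffOn ℝ 3 v (Set.Ioo lo hi))
    (hv' : ∀ t ∈ Set.Ioo lo hi, deriv v t ≠ 0)
    (hu₁ : u₁ = fun t => |deriv v t| ^ (-(1 : ℝ) / 2) * v t)
    (hu₂ : u₂ = fun t => |deriv v t| ^ (-(1 : ℝ) / 2)) :
    (∃ ε : ℝ, (ε = 1 ∨ ε = -1) ∧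
      ∀ t ∈ Set.Ioo lo hi, deriv u₁ t * u₂ t - deriv u₂ t * u₁ t = ε) ∧
    (∀ t ∈ Set.Ioo lo hi, deriv (deriv u₁) t + schwarzian v t / 2 * u₁ t = 0) ∧
    (∀ t ∈ Set.Ioo lo hi, deriv (deriv u₂) t + schwarzian v t / 2 * u₂ t = 0) := by
  subst hu₁ hu₂
  by_cases hne : (Set.Ioo lo hi).Nonempty
  · obtain ⟨t₀, ht₀⟩ := hne
    set ε : ℝ := if 0 < deriv v t₀ then 1 else -1 with hεdef
    have hε : ε = 1 ∨ ε = -1 := by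
      rw [hεdef]; split <;> simp
    have hcont : ContinuousOn (deriv v) (Set.Ioo lo hi) :=
      (hv.deriv_of_isOpen (m := 2) isOpen_Ioo (by norm_num)).continuousOn
    have hIVT : ∀ s₁ ∈ Set.Ioo lo hi, ∀ s₂ ∈ Set.Ioo lo hi,
        0 < deriv v s₁ → deriv v s₂ < 0 → False := by
      intro s₁ h₁ s₂ h₂ hpos hneg
      have hsub : Set.uIcc s₂ s₁ ⊆ Set.Ioo lo hi :=
        Set.ordConnected_Ioo.uIcc_subset h₂ h₁
      have h0 : (0:ℝ) ∈ Set.uIcc (deriv v s₂) (deriv v s₁) :=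
        Set.mem_uIcc.2 (Or.inl ⟨hneg.le, hpos.le⟩)
      obtain ⟨s, hs, hs0⟩ := intermediate_value_uIcc (hcont.mono hsub) h0
      exact hv' s (hsub hs) hs0
    have hsign : ∀ t ∈ Set.Ioo lo hi, 0 < ε * deriv v t := by
      intro t ht
      rcases (hv' t ht).lt_or_gt with h | h
      · have h0 : ¬ 0 < deriv v t₀ := fun hp => hIVT t₀ ht₀ t ht hp h
        rw [hεdef, if_neg h0]; linarith
      · have h0 : 0 < deriv v t₀ := by
          rcases (hv' t₀ ht₀).lt_or_gt with h' | h'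
          · exact (hIVT t ht t₀ ht₀ h h').elim
          · exact h'
        rw [hεdef, if_pos h0]; linarith
    have main := aux_main lo hi ε v hε hv hv' hsign
    exact ⟨⟨ε, hε, fun t ht => (main t ht).1⟩,
      fun t ht => (main t ht).2.1, fun t ht => (main t ht).2.2⟩
  · exact ⟨⟨1, Or.inl rfl, fun t ht => absurd ⟨t, ht⟩ hne⟩,
      fun t ht => absurd ⟨t, ht⟩ hne, fun t ht => absurd ⟨t, ht⟩ hne⟩
end

section
/- Separation theorem for singular ODEs: let q̄ : (0,T) → ℝ be continuous and let ū, v̄ : (0,T) → ℝ be linearly independent solutions of w'' + q̄·w = 0 such that v̄ has a finite nonzero limit at t = 0, ū tends to 0 at t = 0, and ū(t₂) = 0 for some t₂ ∈ (0,T) with ū ≠ 0 on (0,t₂). Then v̄ has at least one zero in (0,t₂). -/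
/-!
If `v̄` had no zero in `(0, t₂)`, it would not vanish at `t₂` either, since there the Wronskian
reduces to `-v̄ ū'`. The quotient `ū / v̄` would then tend to `0` at both ends of `(0, t₂)`, and
Rolle's theorem would give a point where its derivative, minus the Wronskian over `v̄²`, vanishes.
-/

open Filter Set Topology

theorem exists_mem_Ioo_eq_zero_of_wronskian_ne_zero {u v : ℝ → ℝ} {a b : ℝ} (hab : a < b)
    (hu : ∀ t ∈ Ioo a b, DifferentiableAt ℝ u t) (hv : ∀ t ∈ Ioo a b, DifferentiableAt ℝ v t)
    (hW : ∀ t ∈ Ioo a b, u t * deriv v t - v t * deriv u t ≠ 0)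
    (ha : Tendsto (fun t ↦ u t / v t) (𝓝[>] a) (𝓝 0))
    (hb : Tendsto (fun t ↦ u t / v t) (𝓝[<] b) (𝓝 0)) :
    ∃ t ∈ Ioo a b, v t = 0 := by
  by_contra! hv0
  have hderiv : ∀ t ∈ Ioo a b, HasDerivAt (fun t ↦ u t / v t)
      ((deriv u t * v t - u t * deriv v t) / v t ^ 2) t := fun t ht ↦
    (hu t ht).hasDerivAt.div (hv t ht).hasDerivAt (hv0 t ht)
  obtain ⟨c, hc, hc0⟩ := exists_hasDerivAt_eq_zero' hab ha hb hderiv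
  rw [div_eq_zero_iff, or_iff_left (pow_ne_zero 2 (hv0 c hc))] at hc0
  exact hW c hc (by linarith)

theorem separation_singular_general (T : ℝ) (ub vb : ℝ → ℝ)
    (hub : ContDiffOn ℝ 2 ub (Set.Ioo 0 T))
    (hvb : ContDiffOn ℝ 2 vb (Set.Ioo 0 T))
    (hW : ∀ t ∈ Set.Ioo 0 T, ub t * deriv vb t - vb t * deriv ub t ≠ 0)
    (L : ℝ) (hL : L ≠ 0)
    (hvlim : Filter.Tendsto vb (nhdsWithin 0 (Set.Ioi 0)) (nhds L))
    (hulim : Filter.Tendsto ub (nhdsWithin 0 (Set.Ioi 0)) (nhds 0))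
    (t₂ : ℝ) (ht₂ : t₂ ∈ Set.Ioo 0 T) (hz : ub t₂ = 0) :
    ∃ t ∈ Set.Ioo 0 t₂, vb t = 0 := by
  have hdiff {w : ℝ → ℝ} (hw : ContDiffOn ℝ 2 w (Ioo 0 T)) {t : ℝ} (ht : t ∈ Ioo 0 T) :
      DifferentiableAt ℝ w t :=
    (hw.differentiableOn two_ne_zero).differentiableAt (isOpen_Ioo.mem_nhds ht)
  have hsub : Ioo 0 t₂ ⊆ Ioo 0 T := Ioo_subset_Ioo_right ht₂.2.le
  have hvt₂ : vb t₂ ≠ 0 := fun h ↦ hW t₂ ht₂ (by rw [hz, h]; ring)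
  have hquot_t₂ : Tendsto (fun t ↦ ub t / vb t) (𝓝[<] t₂) (𝓝 0) := by
    have hcont := (hdiff hub ht₂).continuousAt.div (hdiff hvb ht₂).continuousAt hvt₂
    rw [← zero_div (vb t₂), ← hz]
    exact hcont.tendsto.mono_left nhdsWithin_le_nhds
  have hquot_0 : Tendsto (fun t ↦ ub t / vb t) (𝓝[>] 0) (𝓝 0) := by
    have hdiv := hulim.div hvlim hL
    rwa [zero_div] at hdiv
  exact exists_mem_Ioo_eq_zero_of_wronskian_ne_zero ht₂.1 (fun t ht ↦ hdiff hub (hsub ht))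
    (fun t ht ↦ hdiff hvb (hsub ht)) (fun t ht ↦ hW t (hsub ht)) hquot_0 hquot_t₂

/-- Separation theorem for singular second-order ODEs: if `ū, v̄` are linearly
independent solutions of `w'' + q̄ w = 0` on `(0,T)`, `v̄` has a finite nonzero limit at
`0`, `ū → 0` at `0` and `ū(t₂) = 0` with `ū ≠ 0` on `(0,t₂)`, then `v̄` vanishes
somewhere in `(0,t₂)`. -/
theorem separation_singular (T : ℝ) (hT : 0 < T) (qb ub vb : ℝ → ℝ)
    (hqb : ContinuousOn qb (Set.Ioo 0 T))
    (hub : ContDiffOn ℝ 2 ub (Set.Ioo 0 T))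
    (hvb : ContDiffOn ℝ 2 vb (Set.Ioo 0 T))
    (hodeu : ∀ t ∈ Set.Ioo 0 T, deriv (deriv ub) t + qb t * ub t = 0)
    (hodev : ∀ t ∈ Set.Ioo 0 T, deriv (deriv vb) t + qb t * vb t = 0)
    (hW : ∀ t ∈ Set.Ioo 0 T, ub t * deriv vb t - vb t * deriv ub t ≠ 0)
    (L : ℝ) (hL : L ≠ 0)
    (hvlim : Filter.Tendsto vb (nhdsWithin 0 (Set.Ioi 0)) (nhds L))
    (hulim : Filter.Tendsto ub (nhdsWithin 0 (Set.Ioi 0)) (nhds 0))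
    (t₂ : ℝ) (ht₂ : t₂ ∈ Set.Ioo 0 T) (hz : ub t₂ = 0)
    (hnz : ∀ t ∈ Set.Ioo 0 t₂, ub t ≠ 0) :
    ∃ t ∈ Set.Ioo 0 t₂, vb t = 0 :=
  separation_singular_general T ub vb hub hvb hW L hL hvlim hulim t₂ ht₂ hz
end

section
/- For k₂ > 0 and w ≥ 0, the function ū(r) = sin((√k₂/2)·r·(r + 2w)) / √(r + w), defined for r > 0, satisfies the ODE ū'' + q̄·ū = 0 with q̄(r) = −3/(4·(r + w)²) + k₂·(r + w)², and its first positive zero is r = −w + √(w² + 2π/√k₂). -/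
/-!
With `φ(r) = (a/2) r (r + 2w)` one has `φ' = a (r + w)` and `φ'' = a`, so `ū = sin φ / √(r + w)`
is, up to the constant `√a`, the Liouville–Green form `sin φ / √φ'`. Such a function solves
`u'' + q u = 0` exactly for `q = φ'² - (3/4) (φ''/φ')² + φ'''/(2φ')`, which here is
`a² (r + w)² - 3 / (4 (r + w)²)`. The zeros of `ū` are those of `sin φ`; as `φ` increases from
`φ(0) = 0`, the first positive one is where `φ = π`.
-/

open Real

noncomputable section

namespace ModelSolution

variable (a w : ℝ)

def phase (s : ℝ) : ℝ := a / 2 * s * (s + 2 * w)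

def u (s : ℝ) : ℝ := sin (phase a w s) / √(s + w)

def u' (s : ℝ) : ℝ :=
  a * √(s + w) * cos (phase a w s) - sin (phase a w s) / (2 * (s + w) * √(s + w))

def firstZero : ℝ := -w + √(w ^ 2 + 2 * π / a)

variable {a w}

theorem hasDerivAt_phase (s : ℝ) : HasDerivAt (phase a w) (a * (s + w)) s := by
  unfold phase
  exact (((hasDerivAt_id' s).const_mul (a / 2)).fun_mul
    ((hasDerivAt_id' s).add_const (2 * w))).congr_deriv (by ring)

theorem hasDerivAt_sqrt_add {s : ℝ} (hs : 0 < s + w) :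
    HasDerivAt (fun s => √(s + w)) (1 / (2 * √(s + w))) s :=
  ((hasDerivAt_id' s).add_const w).sqrt hs.ne'

theorem hasDerivAt_u {s : ℝ} (hs : 0 < s + w) : HasDerivAt (u a w) (u' a w s) s := by
  have hS : √(s + w) ≠ 0 := sqrt_ne_zero'.mpr hs
  refine (((hasDerivAt_phase s).sin).div (hasDerivAt_sqrt_add hs) hS).congr_deriv ?_
  rw [u']
  have hS2 := sq_sqrt hs.le
  generalize √(s + w) = S at hS hS2 ⊢
  rw [← hS2]
  field_simp

theorem hasDerivAt_u' {s : ℝ} (hs : 0 < s + w) :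
    HasDerivAt (u' a w) (-(-3 / (4 * (s + w) ^ 2) + a ^ 2 * (s + w) ^ 2) * u a w s) s := by
  have hS := hasDerivAt_sqrt_add hs
  have hden := (((hasDerivAt_id' s).add_const w).const_mul 2).fun_mul hS
  have hden0 : 2 * (s + w) * √(s + w) ≠ 0 := by positivity
  refine (((hS.const_mul a).mul (hasDerivAt_phase s).cos).sub
    (((hasDerivAt_phase s).sin).div hden hden0)).congr_deriv ?_
  rw [u]
  have hS0 : √(s + w) ≠ 0 := sqrt_ne_zero'.mpr hs
  have hS2 := sq_sqrt hs.le
  generalize √(s + w) = S at hS0 hS2 ⊢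
  rw [← hS2]
  field_simp
  ring

theorem deriv_deriv_u_add {s : ℝ} (hs : 0 < s + w) :
    deriv (deriv (u a w)) s + (-3 / (4 * (s + w) ^ 2) + a ^ 2 * (s + w) ^ 2) * u a w s = 0 := by
  have hderiv : deriv (u a w) =ᶠ[nhds s] u' a w :=
    Filter.eventuallyEq_of_mem (isOpen_Ioi.mem_nhds (neg_lt_iff_pos_add.mpr hs))
      fun t ht => (hasDerivAt_u (neg_lt_iff_pos_add.mp ht)).deriv
  rw [hderiv.deriv_eq, (hasDerivAt_u' hs).deriv]
  ring

theorem u_eq_zero_iff {s : ℝ} (hs : 0 < s + w) : u a w s = 0 ↔ sin (phase a w s) = 0 := by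
  rw [u, div_eq_zero_iff, or_iff_left (sqrt_ne_zero'.mpr hs)]

theorem phase_eq (s : ℝ) : phase a w s = a / 2 * ((s + w) ^ 2 - w ^ 2) := by
  rw [phase]
  ring

theorem phase_pos (ha : 0 < a) (hw : 0 ≤ w) {s : ℝ} (hs : 0 < s) : 0 < phase a w s := by
  rw [phase]
  positivity

theorem firstZero_pos (ha : 0 < a) (hw : 0 ≤ w) : 0 < firstZero a w := by
  have : w < √(w ^ 2 + 2 * π / a) := (lt_sqrt hw).mpr (by simp [ha, pi_pos])
  rw [firstZero]
  linarith

theorem phase_firstZero (ha : 0 < a) : phase a w (firstZero a w) = π := by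
  have hsq : (firstZero a w + w) ^ 2 = w ^ 2 + 2 * π / a := by
    rw [firstZero, neg_add_cancel_comm, sq_sqrt (by positivity)]
  rw [phase_eq, hsq]
  field_simp
  ring

theorem pi_le_phase_iff (ha : 0 < a) {s : ℝ} (hs : 0 ≤ s + w) :
    π ≤ phase a w s ↔ firstZero a w ≤ s := by
  rw [firstZero, neg_add_le_iff_le_add, add_comm w, sqrt_le_left hs, ← le_sub_iff_add_le',
    div_le_iff₀ ha, phase_eq]
  constructor <;> intro <;> linarith

theorem pi_le_of_sin_eq_zero {x : ℝ} (hx : 0 < x) (h : sin x = 0) : π ≤ x := by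
  by_contra! hlt
  exact (sin_pos_of_pos_of_lt_pi hx hlt).ne' h

theorem isLeast_u_zeros (ha : 0 < a) (hw : 0 ≤ w) :
    IsLeast {r | 0 < r ∧ u a w r = 0} (firstZero a w) := by
  refine ⟨⟨firstZero_pos ha hw, ?_⟩, ?_⟩
  · rw [u_eq_zero_iff (by linarith [firstZero_pos ha hw]), phase_firstZero ha, sin_pi]
  · rintro r ⟨hr, hzero⟩
    have hrw : 0 < r + w := by linarith
    exact (pi_le_phase_iff ha hrw.le).mp
      (pi_le_of_sin_eq_zero (phase_pos ha hw hr) ((u_eq_zero_iff hrw).mp hzero))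

end ModelSolution

end

/-- The model function `ū(r) = sin((√k₂/2) r (r + 2w)) / √(r + w)` solves
`ū'' + q̄ ū = 0` with `q̄(r) = -3/(4 (r+w)²) + k₂ (r+w)²`, and its first positive zero
is `-w + √(w² + 2π/√k₂)`. -/
theorem model_solution_k2 (k₂ w : ℝ) (hk₂ : 0 < k₂) (hw : 0 ≤ w) :
    (∀ r : ℝ, 0 < r →
      deriv (deriv (fun s : ℝ =>
          Real.sin (Real.sqrt k₂ / 2 * s * (s + 2 * w)) / Real.sqrt (s + w))) r +
        (-3 / (4 * (r + w) ^ 2) + k₂ * (r + w) ^ 2) *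
          (Real.sin (Real.sqrt k₂ / 2 * r * (r + 2 * w)) / Real.sqrt (r + w)) = 0) ∧
    sInf {r : ℝ | 0 < r ∧
        Real.sin (Real.sqrt k₂ / 2 * r * (r + 2 * w)) / Real.sqrt (r + w) = 0} =
      -w + Real.sqrt (w ^ 2 + 2 * Real.pi / Real.sqrt k₂) := by
  refine ⟨fun r hr => ?_, (ModelSolution.isLeast_u_zeros (sqrt_pos.mpr hk₂) hw).csInf_eq⟩
  have h := ModelSolution.deriv_deriv_u_add (a := √k₂) (w := w) (s := r) (by linarith)
  rwa [sq_sqrt hk₂.le] at h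
end
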